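/- arXiv:2402.08949 — 2 statements merged into one kernel-verified Lean document; each statement's English description precedes it below -/
import Mathlib

section
/- The partial trace over the last N_B tensor factors of the cyclic shift operator T on (C^2)^{⊗N} (with N = N_A + N_B, N_A ≥ 1, N_B ≥ 1) equals the cyclic shift operator T_A on the first N_A factors. -/
/-- The cyclic shift operator on `(ℂ^d)^{⊗N}` in the computational basis. -/
def shiftMatrix (N d : ℕ) [NeZero N] : Matrix (Fin N → Fin d) (Fin N → Fin d) ℂ :=
  Matrix.of fun s t => if (∀ i, s i = t (i - 1)) then 1 else 0

/-- Partial trace over the last `N_B` tensor factors of an operator on `N_A + N_B` qudits. -/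
noncomputable def ptraceB {N_A N_B d : ℕ}
    (M : Matrix (Fin (N_A + N_B) → Fin d) (Fin (N_A + N_B) → Fin d) ℂ) :
    Matrix (Fin N_A → Fin d) (Fin N_A → Fin d) ℂ :=
  Matrix.of fun a a' => ∑ b : Fin N_B → Fin d, M (Fin.append a b) (Fin.append a' b)

instance (N_A N_B : ℕ) [NeZero N_A] : NeZero (N_A + N_B) :=
  ⟨by have := NeZero.pos N_A; omega⟩

theorem sub_one_val (N : ℕ) [NeZero N] (i : Fin N) :
    (i - 1).val = if i.val = 0 then N - 1 else i.val - 1 := by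
  rw [Fin.sub_def]
  simp only [Fin.val_one']
  have := i.isLt
  have hN := NeZero.pos N
  rcases Nat.lt_or_ge 1 N with h | h
  · rw [Nat.mod_eq_of_lt h]
    rcases eq_or_ne i.val 0 with h0 | h0
    · rw [if_pos h0, h0]; { rw [Nat.mod_eq_of_lt]; omega; omega }
    · rw [if_neg h0]
      have : N - 1 + i.val = N + (i.val - 1) := by omega
      rw [this, Nat.add_mod_left, Nat.mod_eq_of_lt] <;> omega
  · have hn1 : N = 1 := by omega
    subst hn1
    simp

theorem sub1_ne {N : ℕ} [NeZero N] (i : Fin N) (h : i.val ≠ 0) : (i - 1).val = i.val - 1 := by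
  rw [sub_one_val, if_neg h]

theorem sub1_zero {N : ℕ} [NeZero N] (i : Fin N) (h : i.val = 0) : (i - 1).val = N - 1 := by
  rw [sub_one_val, if_pos h]

theorem app_lt' {α : Sort*} {n m : ℕ} (a : Fin n → α) (b : Fin m → α) (i : Fin (n + m))
    (j : Fin n) (h : i.val = j.val) : Fin.append a b i = a j := by
  have e : i = Fin.castAdd m j := by ext; simpa using h
  rw [e, Fin.append_left]

theorem app_ge' {α : Sort*} {n m : ℕ} (a : Fin n → α) (b : Fin m → α) (i : Fin (n + m))
    (j : Fin m) (h : i.val = n + j.val) : Fin.append a b i = b j := by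
  have e : i = Fin.natAdd n j := by ext; simpa using h
  rw [e, Fin.append_right]

theorem key (N_A N_B : ℕ) [NeZero N_A] [NeZero N_B] (a a' : Fin N_A → Fin 2)
    (b : Fin N_B → Fin 2) :
    (∀ i : Fin (N_A + N_B), Fin.append a b i = Fin.append a' b (i - 1)) ↔
      ((∀ i : Fin N_A, a i = a' (i - 1)) ∧ b = fun _ => a' (0 - 1)) := by
  have hA := NeZero.pos N_A
  have hB := NeZero.pos N_B
  have hc : (0 - 1 : Fin N_A).val = N_A - 1 := by rw [sub1_zero]; simp
  constructor
  · intro h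
    have hb : ∀ k (hk : k < N_B), b ⟨k, hk⟩ = a' (0 - 1) := by
      intro k
      induction k with
      | zero =>
        intro hk
        have h0 := h ⟨N_A, by omega⟩
        have hs : ((⟨N_A, by omega⟩ : Fin (N_A + N_B)) - 1).val = N_A - 1 :=
          (sub1_ne _ (by simpa using hA.ne')).trans rfl
        rw [app_ge' a b _ ⟨0, hB⟩ (by simp), app_lt' a' b _ (0 - 1) (by rw [hs, hc])] at h0
        exact h0
      | succ k ih =>
        intro hk
        have h0 := h ⟨N_A + k + 1, by omega⟩
        have hs : ((⟨N_A + k + 1, by omega⟩ : Fin (N_A + N_B)) - 1).val = N_A + k :=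
          (sub1_ne _ (by simp)).trans (by simp)
        rw [app_ge' a b _ ⟨k + 1, hk⟩ (by simp; omega),
            app_ge' a' b _ ⟨k, by omega⟩ (by rw [hs])] at h0
        rw [h0]
        exact ih (by omega)
    refine ⟨?_, funext fun j => by have := hb j.val j.isLt; simpa using this⟩
    intro i
    rcases eq_or_ne i.val 0 with h0 | h0
    · have h1 := h ⟨0, by omega⟩
      have hs : ((⟨0, by omega⟩ : Fin (N_A + N_B)) - 1).val = N_A + N_B - 1 :=
        sub1_zero _ rfl
      rw [app_lt' a b _ i (by simp [h0]),
          app_ge' a' b _ ⟨N_B - 1, by omega⟩ (by rw [hs]; simp; omega)] at h1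
      have e : i - 1 = 0 - 1 := by ext; rw [sub1_zero i h0, hc]
      rw [e, h1, hb (N_B - 1) (by omega)]
    · have h1 := h ⟨i.val, by omega⟩
      have hs : ((⟨i.val, by omega⟩ : Fin (N_A + N_B)) - 1).val = i.val - 1 :=
        sub1_ne _ h0
      rw [app_lt' a b _ i rfl,
          app_lt' a' b _ (i - 1) (by rw [hs, sub1_ne i h0])] at h1
      exact h1
  · rintro ⟨h1, h2⟩ i
    have hconst : ∀ j : Fin N_B, b j = a' (0 - 1) := fun j => by rw [h2]
    have hiLt := i.isLt
    rcases Nat.lt_or_ge i.val N_A with hi | hi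
    · rcases eq_or_ne i.val 0 with h0 | h0
      · have hs : (i - 1).val = N_A + N_B - 1 := sub1_zero i h0
        rw [app_lt' a b i ⟨0, hA⟩ (by simp [h0]),
            app_ge' a' b (i - 1) ⟨N_B - 1, by omega⟩ (by rw [hs]; simp; omega), hconst]
        have e : (⟨0, hA⟩ : Fin N_A) - 1 = 0 - 1 := by ext; rw [sub1_zero _ rfl, hc]
        rw [h1 ⟨0, hA⟩, e]
      · have hs : (i - 1).val = i.val - 1 := sub1_ne i h0
        rw [app_lt' a b i ⟨i.val, hi⟩ rfl,
            app_lt' a' b (i - 1) (⟨i.val, hi⟩ - 1)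
              (by rw [hs, sub1_ne _ (by simpa using h0)])]
        exact h1 ⟨i.val, hi⟩
    · have h0 : i.val ≠ 0 := by omega
      have hs : (i - 1).val = i.val - 1 := sub1_ne i h0
      rcases eq_or_ne i.val N_A with hNA | hNA
      · rw [app_ge' a b i ⟨0, hB⟩ (by simp [hNA]), hconst,
            app_lt' a' b (i - 1) (0 - 1) (by rw [hs, hc]; omega)]
      · rw [app_ge' a b i ⟨i.val - N_A, by omega⟩ (by simp; omega), hconst,
            app_ge' a' b (i - 1) ⟨i.val - 1 - N_A, by omega⟩ (by rw [hs]; simp; omega), hconst]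

/-- The partial trace over the last `N_B` factors of the cyclic shift on `(ℂ^2)^{⊗(N_A+N_B)}`
equals the cyclic shift on the first `N_A` factors. -/
theorem ptraceB_shiftMatrix (N_A N_B : ℕ) [NeZero N_A] [NeZero N_B] :
    ptraceB (shiftMatrix (N_A + N_B) 2) = shiftMatrix N_A 2 := by
  ext a a'
  simp only [ptraceB, shiftMatrix, Matrix.of_apply]
  simp only [key N_A N_B a a']
  by_cases hQ : ∀ i : Fin N_A, a i = a' (i - 1)
  · simp [hQ, Finset.sum_ite_eq']
  · simp [hQ]
end

section
/- For any operator W on (C^2)^{⊗N_A} arising as the partial trace Tr_B(T^j) of a power of the cyclic shift, its trace norm satisfies ‖Tr_B(T^j)‖_1 ≤ 2^{N_A} · 2^{gcd(N,j) - min(N_A, gcd(N,j))}; in particular, when gcd(N,j) ≤ N_A, Tr_B(T^j) is a permutation matrix on (C^2)^{⊗N_A} times a nonnegative integer, and ‖Tr_B(T^j)‖_1 ≤ 2^{N_A}. Consequently, (1/2^N)‖Σ_{j=1}^{N-1} e^{2πijk/N} Tr_B(T^j)‖_1 ≤ (N-1)/2^{N_B} when N is prime and N_A ≥ 2. -/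
open scoped Real ComplexOrder

/-- The trace norm (Schatten 1-norm) of a square complex matrix: `Tr √(MᴴM)`. -/
noncomputable def traceNorm {n : Type*} [Fintype n] [DecidableEq n]
    (M : Matrix n n ℂ) : ℝ :=
  ((Matrix.isHermitian_conjTranspose_mul_self M).eigenvectorUnitary.1 *
    Matrix.diagonal (((↑) : ℝ → ℂ) ∘ (√·) ∘ (Matrix.isHermitian_conjTranspose_mul_self M).eigenvalues) *
    (star (Matrix.isHermitian_conjTranspose_mul_self M).eigenvectorUnitary : Matrix n n ℂ)).trace.re

/-- The permutation matrix of a permutation `σ`. -/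
def permMat {n : Type*} [Fintype n] [DecidableEq n] (σ : Equiv.Perm n) :
    Matrix n n ℂ :=
  Matrix.of fun i j => if i = σ j then 1 else 0

/-!
Entrywise, `Tr_B(T^j)` at `(a, a')` counts the `b` with `(a, b) = (a', b) ∘ (· - j)`. Such `b`
exist only if `a = a' ∘ ρ`, where `ρ` is the first-return map of `p ↦ p - j` to the sites of `A`.
Writing `x = (a', b)`, the condition on `b` says that `x` is invariant under `p ↦ p - j` off `A`,
so `x` is determined by `a'` on every orbit meeting `A` and is constant on every other orbit. The
orbits are the residue classes mod `g = gcd(N, j)`, so `b` is determined by its values at the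
`g - min N_A g` sites `N_A ≤ p < g`, and is unique when `g ≤ N_A`. Hence `Tr_B(T^j)` is a
permutation matrix times a diagonal matrix with entries at most `2^(g - min N_A g)`, all equal to
`1` when `g ≤ N_A`. Cauchy–Schwarz on the singular values gives `‖M‖₁ ≤ √(dim) ‖M‖_F`, and the
Frobenius norm is subadditive and easy to compute on such matrices.
-/

section TraceNorm

open Finset Matrix

attribute [local instance] frobeniusSeminormedAddCommGroup frobeniusNormedAddCommGroup
  frobeniusNormedSpace

theorem Matrix.frobenius_norm_sq_eq_sum {m n α : Type*} [Fintype m] [Fintype n]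
    [NormedAddCommGroup α] (M : Matrix m n α) : ‖M‖ ^ 2 = ∑ i, ∑ j, ‖M i j‖ ^ 2 := by
  rw [frobenius_norm_def, ← Real.sqrt_eq_rpow, Real.sq_sqrt (by positivity)]
  simp_rw [Real.rpow_two]

variable {n : Type*} [Fintype n] [DecidableEq n]

theorem traceNorm_eq_sum_sqrt_eigenvalues (M : Matrix n n ℂ) :
    traceNorm M = ∑ i, √((isHermitian_conjTranspose_mul_self M).eigenvalues i) := by
  rw [traceNorm, trace_mul_cycle, Unitary.coe_star_mul_self, one_mul, trace_diagonal,
    Complex.re_sum]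
  rfl

theorem sum_eigenvalues_conjTranspose_mul_self (M : Matrix n n ℂ) :
    ∑ i, (isHermitian_conjTranspose_mul_self M).eigenvalues i = ‖M‖ ^ 2 := by
  have h := (isHermitian_conjTranspose_mul_self M).trace_eq_sum_eigenvalues
  rw [frobenius_norm_sq_eq_sum, sum_comm]
  apply Complex.ofReal_injective
  simp only [trace, diag_apply, mul_apply, conjTranspose_apply, RCLike.star_def,
    Complex.conj_mul'] at h
  push_cast
  exact h.symm

theorem traceNorm_le_sqrt_card_mul_frobenius_norm (M : Matrix n n ℂ) :
    traceNorm M ≤ √(Fintype.card n) * ‖M‖ := by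
  have hev := (posSemidef_conjTranspose_mul_self M).eigenvalues_nonneg
  rw [traceNorm_eq_sum_sqrt_eigenvalues, ← Real.sqrt_sq (norm_nonneg M),
    ← Real.sqrt_mul (Nat.cast_nonneg _), ← sum_eigenvalues_conjTranspose_mul_self]
  apply Real.le_sqrt_of_sq_le
  calc (∑ i, √((isHermitian_conjTranspose_mul_self M).eigenvalues i)) ^ 2
      ≤ #univ * ∑ i, √((isHermitian_conjTranspose_mul_self M).eigenvalues i) ^ 2 :=
        sq_sum_le_card_mul_sum_sq
    _ = _ := by simp_rw [Real.sq_sqrt (hev _), card_univ]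

theorem frobenius_norm_sq_permMat_mul_diagonal (σ : Equiv.Perm n) (w : n → ℂ) :
    ‖permMat σ * diagonal w‖ ^ 2 = ∑ i, ‖w i‖ ^ 2 := by
  rw [frobenius_norm_sq_eq_sum, sum_comm]
  simp [mul_diagonal, permMat, apply_ite]

theorem frobenius_norm_permMat (σ : Equiv.Perm n) : ‖permMat σ‖ = √(Fintype.card n) := by
  rw [← Real.sqrt_sq (norm_nonneg _), ← mul_one (permMat σ), ← diagonal_one,
    frobenius_norm_sq_permMat_mul_diagonal]
  simp

theorem traceNorm_permMat_mul_diagonal_le (σ : Equiv.Perm n) {w : n → ℂ} {c : ℝ}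
    (hw : ∀ i, ‖w i‖ ≤ c) : traceNorm (permMat σ * diagonal w) ≤ Fintype.card n * c := by
  have hc : 0 ≤ √(Fintype.card n) * c := by
    rcases isEmpty_or_nonempty n with _ | ⟨⟨i⟩⟩
    · simp
    · exact mul_nonneg (Real.sqrt_nonneg _) ((norm_nonneg _).trans (hw i))
  have hnorm : ‖permMat σ * diagonal w‖ ≤ √(Fintype.card n) * c := by
    refine le_of_sq_le_sq ?_ hc
    rw [frobenius_norm_sq_permMat_mul_diagonal, mul_pow, Real.sq_sqrt (Nat.cast_nonneg _),
      ← nsmul_eq_mul, ← card_univ, ← sum_const]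
    exact sum_le_sum fun i _ => pow_le_pow_left₀ (norm_nonneg _) (hw i) 2
  calc traceNorm (permMat σ * diagonal w)
      ≤ √(Fintype.card n) * (√(Fintype.card n) * c) :=
        (traceNorm_le_sqrt_card_mul_frobenius_norm _).trans
          (mul_le_mul_of_nonneg_left hnorm (Real.sqrt_nonneg _))
    _ = Fintype.card n * c := by rw [← mul_assoc, Real.mul_self_sqrt (Nat.cast_nonneg _)]

theorem traceNorm_sum_smul_permMat_le {ι : Type*} (s : Finset ι) (z : ι → ℂ)
    (M : ι → Matrix n n ℂ) (hM : ∀ j ∈ s, ∃ σ, M j = permMat σ) :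
    traceNorm (∑ j ∈ s, z j • M j) ≤ (∑ j ∈ s, ‖z j‖) * Fintype.card n := by
  have hnorm : ‖∑ j ∈ s, z j • M j‖ ≤ (∑ j ∈ s, ‖z j‖) * √(Fintype.card n) := by
    rw [sum_mul]
    refine (norm_sum_le _ _).trans (sum_le_sum fun j hj => ?_)
    obtain ⟨σ, hσ⟩ := hM j hj
    rw [norm_smul, hσ, frobenius_norm_permMat]
  calc traceNorm (∑ j ∈ s, z j • M j)
      ≤ √(Fintype.card n) * ((∑ j ∈ s, ‖z j‖) * √(Fintype.card n)) :=
        (traceNorm_le_sqrt_card_mul_frobenius_norm _).trans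
          (mul_le_mul_of_nonneg_left hnorm (Real.sqrt_nonneg _))
    _ = (∑ j ∈ s, ‖z j‖) * Fintype.card n := by
        rw [mul_comm, mul_assoc, Real.mul_self_sqrt (Nat.cast_nonneg _)]

end TraceNorm

section FirstHit

variable {X V : Type*} {f : X → X} {A : Set X}

theorem apply_iterate_eq_of_forall_lt {v : X → V} (hv : ∀ y ∉ A, v (f y) = v y) {x : X}
    {n : ℕ} (hn : ∀ m < n, f^[m] x ∉ A) : v (f^[n] x) = v x := by
  induction n with
  | zero => rfl
  | succ n ih =>
    rw [Function.iterate_succ_apply', hv _ (hn n n.lt_succ_self)]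
    exact ih fun m hm => hn m (hm.trans n.lt_succ_self)

variable (f A) [DecidablePred (· ∈ A)]

open scoped Classical in
noncomputable def firstHit (x : X) : X :=
  if h : ∃ n, f^[n] x ∈ A then f^[Nat.find h] x else x

variable {f A}

theorem firstHit_eq_iterate {x : X} (h : ∃ n, f^[n] x ∈ A) :
    firstHit f A x = f^[Nat.find h] x :=
  dif_pos h

theorem firstHit_mem {x : X} (h : ∃ n, f^[n] x ∈ A) : firstHit f A x ∈ A := by
  rw [firstHit_eq_iterate h]
  exact Nat.find_spec h

theorem firstHit_of_mem {x : X} (hx : x ∈ A) : firstHit f A x = x := by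
  rw [firstHit_eq_iterate ⟨0, hx⟩, (Nat.find_eq_zero _).2 hx]
  rfl

theorem firstHit_apply_of_notMem {x : X} (h : ∃ n, f^[n] x ∈ A) (hx : x ∉ A) :
    firstHit f A (f x) = firstHit f A x := by
  obtain ⟨_ | n, hn⟩ := h
  · exact absurd hn hx
  have h' : ∃ n, f^[n] (f x) ∈ A := ⟨n, hn⟩
  rw [firstHit_eq_iterate h', firstHit_eq_iterate ⟨_, hn⟩,
    Nat.find_comp_succ (p := fun n => f^[n] x ∈ A) ⟨_, hn⟩ h' hx]
  rfl

theorem apply_firstHit {v : X → V} (hv : ∀ y ∉ A, v (f y) = v y) {x : X}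
    (h : ∃ n, f^[n] x ∈ A) : v (firstHit f A x) = v x := by
  rw [firstHit_eq_iterate h]
  exact apply_iterate_eq_of_forall_lt hv fun m hm => Nat.find_min h hm

theorem eq_of_invariant_of_eqOn {v w : X → V} (hv : ∀ y ∉ A, v (f y) = v y)
    (hw : ∀ y ∉ A, w (f y) = w y) {R : Set X} (hR : ∀ x, ∃ t, f^[t] x ∈ R)
    (hA : Set.EqOn v w A) (hRA : Set.EqOn v w (R \ A)) : v = w := by
  funext x
  by_cases h : ∃ n, f^[n] x ∈ A
  · rw [← apply_firstHit hv h, ← apply_firstHit hw h]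
    exact hA (firstHit_mem h)
  · simp only [not_exists] at h
    obtain ⟨t, ht⟩ := hR x
    rw [← apply_iterate_eq_of_forall_lt hv fun m _ => h m,
      ← apply_iterate_eq_of_forall_lt hw fun m _ => h m]
    exact hRA ⟨ht, h t⟩

theorem injOn_firstHit_comp (hf : f.Injective) (hret : ∀ x ∈ A, ∃ n, f^[n] (f x) ∈ A) :
    Set.InjOn (firstHit f A ∘ f) A := by
  intro x₁ hx₁ x₂ hx₂ h
  wlog hle : Nat.find (hret x₁ hx₁) ≤ Nat.find (hret x₂ hx₂) generalizing x₁ x₂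
  · exact (this hx₂ hx₁ h.symm (le_of_not_ge hle)).symm
  set n₁ := Nat.find (hret x₁ hx₁)
  set n₂ := Nat.find (hret x₂ hx₂)
  have hiter : f^[n₁ + 1] x₁ = f^[n₁ + 1] (f^[n₂ - n₁] x₂) := by
    rw [← Function.iterate_add_apply, Nat.add_right_comm, Nat.add_sub_cancel' hle]
    rw [Function.comp_apply, Function.comp_apply, firstHit_eq_iterate (hret x₁ hx₁),
      firstHit_eq_iterate (hret x₂ hx₂)] at h
    exact h
  -- a positive `d` would make `x₁ = f^[d] x₂` an earlier return of `x₂` to `A`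
  obtain ⟨d, hd⟩ : ∃ d, x₁ = f^[d] x₂ ∧ d ≤ n₂ := ⟨_, (hf.iterate _) hiter, Nat.sub_le _ _⟩
  rcases d with _ | d
  · exact hd.1
  · have hmin := Nat.find_min' (hret x₂ hx₂) (hd.1 ▸ hx₁ : f^[d] (f x₂) ∈ A)
    omega

end FirstHit

theorem sub_right_iterate_apply {G : Type*} [AddGroup G] (a b : G) (n : ℕ) :
    (· - a)^[n] b = b - n • a := by
  have h : (· - a) = (· + -a) := funext fun x => sub_eq_add_neg x a
  rw [h, add_right_iterate_apply, neg_nsmul, ← sub_eq_add_neg]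

section CyclicShift

open Fin.CommRing

namespace Fin

theorem exists_nsmul_eq_of_gcd_dvd {N : ℕ} [NeZero N] {j c : ℕ} (h : N.gcd j ∣ c) :
    ∃ t : ℕ, t • (j : Fin N) = c := by
  obtain ⟨s, rfl⟩ := h
  refine ⟨((N.gcdB j : Fin N) * s).val, ?_⟩
  have hbez : ((N.gcd j : ℤ) : Fin N) = ((N * N.gcdA j + j * N.gcdB j : ℤ) : Fin N) :=
    congrArg _ (Nat.gcd_eq_gcd_ab N j)
  push_cast at hbez
  rw [nsmul_eq_mul, Fin.cast_val_eq_self, Fin.natCast_self] at *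
  push_cast
  linear_combination (-(s : Fin N)) * hbez

theorem exists_val_sub_nsmul_lt_gcd {N : ℕ} [NeZero N] (j : ℕ) (p : Fin N) :
    ∃ t : ℕ, ((p - t • (j : Fin N) : Fin N) : ℕ) < N.gcd j := by
  have hg : 0 < N.gcd j := Nat.gcd_pos_of_pos_left _ (NeZero.pos N)
  obtain ⟨t, ht⟩ := exists_nsmul_eq_of_gcd_dvd (Nat.dvd_sub_mod (n := N.gcd j) (p : ℕ))
  refine ⟨t, ?_⟩
  have hsub : p - (((p : ℕ) - p % N.gcd j : ℕ) : Fin N) = (p % N.gcd j : ℕ) := by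
    rw [sub_eq_iff_eq_add', ← Nat.cast_add, Nat.sub_add_cancel (Nat.mod_le _ _),
      Fin.cast_val_eq_self]
  rw [ht, hsub, Fin.val_natCast, Nat.mod_eq_of_lt]
  · exact Nat.mod_lt _ hg
  · exact (Nat.mod_lt _ hg).trans_le (Nat.gcd_le_left _ (NeZero.pos N))

theorem sub_right_iterate_self {N : ℕ} [NeZero N] (a p : Fin N) : (· - a)^[N] p = p := by
  rw [sub_right_iterate_apply, nsmul_eq_mul, Fin.natCast_self, zero_mul, sub_zero]

end Fin

theorem shiftMatrix_pow_apply (N d : ℕ) [NeZero N] (j : ℕ) (s t : Fin N → Fin d) :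
    (shiftMatrix N d ^ j) s t = if ∀ i, s i = t (i - j) then 1 else 0 := by
  induction j generalizing t with
  | zero => simp [Matrix.one_apply, funext_iff]
  | succ j ih =>
    have hT : ∀ u, shiftMatrix N d u t = if u = fun i => t (i - 1) then 1 else 0 := fun u => by
      simp only [shiftMatrix, Matrix.of_apply, funext_iff]
    simp only [pow_succ, Matrix.mul_apply, hT, ih, mul_ite, mul_one, mul_zero,
      Finset.sum_ite_eq', Finset.mem_univ, if_true]
    simp only [Nat.cast_succ, sub_add_eq_sub_sub]

open Finset

variable {N_A N_B d : ℕ} [NeZero N_A]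

theorem exists_iterate_sub_mem (j : ℕ) {p : Fin (N_A + N_B)} (hp : (p : ℕ) < N_A) :
    ∃ n, (· - (j : Fin (N_A + N_B)))^[n] (p - j) ∈ {q : Fin (N_A + N_B) | (q : ℕ) < N_A} :=
  ⟨N_A + N_B - 1, by
    rwa [← Function.iterate_succ_apply, Nat.succ_eq_add_one, Nat.sub_add_cancel NeZero.one_le,
      Fin.sub_right_iterate_self]⟩

variable (N_B) in
noncomputable def shiftReturn (j : ℕ) (i : Fin N_A) : Fin N_A :=
  ⟨(firstHit (· - (j : Fin (N_A + N_B))) {p | (p : ℕ) < N_A} (Fin.castAdd N_B i - j) :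
      Fin (N_A + N_B)),
    (firstHit_mem (exists_iterate_sub_mem j (Fin.castAdd_lt N_B i)) :)⟩

theorem shiftReturn_bijective (j : ℕ) : Function.Bijective (shiftReturn (N_A := N_A) N_B j) := by
  have hinj := injOn_firstHit_comp (f := (· - (j : Fin (N_A + N_B))))
    (A := {p | (p : ℕ) < N_A}) sub_left_injective fun p hp => exists_iterate_sub_mem j hp
  refine Finite.injective_iff_bijective.mp fun i₁ i₂ h => Fin.castAdd_injective _ N_B ?_
  have hval := congrArg Fin.val h
  exact hinj (Fin.castAdd_lt N_B i₁) (Fin.castAdd_lt N_B i₂) (Fin.ext hval)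

variable (N_B d) in
noncomputable def shiftReturnPerm (j : ℕ) : Equiv.Perm (Fin N_A → Fin d) :=
  (Equiv.ofBijective _ (shiftReturn_bijective (N_B := N_B) j)).symm.arrowCongr (Equiv.refl _)

variable (N_B) in
def shiftFiber (j : ℕ) (a : Fin N_A → Fin d) : Finset (Fin N_B → Fin d) :=
  {b | ∀ i : Fin N_B, Fin.append a b (Fin.natAdd N_A i - j) = b i}

variable {j : ℕ} {a : Fin N_A → Fin d} {b : Fin N_B → Fin d}

theorem append_sub_eq_of_mem_shiftFiber (hb : b ∈ shiftFiber N_B j a) :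
    ∀ p ∉ {q : Fin (N_A + N_B) | (q : ℕ) < N_A}, Fin.append a b (p - j) = Fin.append a b p := by
  intro p hp
  induction p using Fin.addCases with
  | left i => exact absurd (Fin.castAdd_lt N_B i) hp
  | right i =>
    rw [Fin.append_right]
    exact (mem_filter.1 hb).2 i

theorem append_castAdd_sub_eq (hb : b ∈ shiftFiber N_B j a) (i : Fin N_A) :
    Fin.append a b (Fin.castAdd N_B i - j) = a (shiftReturn N_B j i) := by
  rw [← apply_firstHit (f := (· - (j : Fin (N_A + N_B)))) (append_sub_eq_of_mem_shiftFiber hb)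
    (exists_iterate_sub_mem j (Fin.castAdd_lt N_B i))]
  have hhit : firstHit (· - (j : Fin (N_A + N_B))) {q | (q : ℕ) < N_A} (Fin.castAdd N_B i - j) =
      Fin.castAdd N_B (shiftReturn N_B j i) := Fin.ext rfl
  rw [hhit, Fin.append_left]

theorem append_eq_append_sub_iff (a' : Fin N_A → Fin d) :
    (∀ p, Fin.append a b p = Fin.append a' b (p - j)) ↔
      b ∈ shiftFiber N_B j a' ∧ a = shiftReturnPerm N_B d j a' := by
  simp only [Fin.forall_fin_add, Fin.append_left, Fin.append_right]
  constructor
  · rintro ⟨hA, hB⟩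
    have hb : b ∈ shiftFiber N_B j a' := mem_filter.2 ⟨mem_univ _, fun i => (hB i).symm⟩
    exact ⟨hb, funext fun i => (hA i).trans (append_castAdd_sub_eq hb i)⟩
  · rintro ⟨hb, rfl⟩
    exact ⟨fun i => (append_castAdd_sub_eq hb i).symm, fun i => ((mem_filter.1 hb).2 i).symm⟩

theorem ptraceB_shiftMatrix_pow (j : ℕ) :
    ptraceB (shiftMatrix (N_A + N_B) d ^ j) =
      permMat (shiftReturnPerm N_B d j) * Matrix.diagonal fun a => (#(shiftFiber N_B j a) : ℂ) := by
  ext a a'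
  simp only [ptraceB, Matrix.of_apply, shiftMatrix_pow_apply, append_eq_append_sub_iff,
    sum_boole, Matrix.mul_diagonal, permMat]
  by_cases h : a = shiftReturnPerm N_B d j a' <;> simp [h]

theorem eq_of_mem_shiftFiber {b₁ b₂ : Fin N_B → Fin d} (hb₁ : b₁ ∈ shiftFiber N_B j a)
    (hb₂ : b₂ ∈ shiftFiber N_B j a) (h : ∀ i : Fin N_B, N_A + i < (N_A + N_B).gcd j → b₁ i = b₂ i) :
    b₁ = b₂ := by
  have hx : Fin.append a b₁ = Fin.append a b₂ := by
    refine eq_of_invariant_of_eqOn (f := (· - (j : Fin (N_A + N_B))))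
      (append_sub_eq_of_mem_shiftFiber hb₁) (append_sub_eq_of_mem_shiftFiber hb₂)
      (R := {p | (p : ℕ) < (N_A + N_B).gcd j}) (fun p => (Fin.exists_val_sub_nsmul_lt_gcd j p).imp
        fun t ht => by rwa [sub_right_iterate_apply]) ?_ ?_
    · intro p hp
      induction p using Fin.addCases with
      | left i => simp only [Fin.append_left]
      | right i => exact absurd hp (by simp)
    · rintro p ⟨hpg, hpA⟩
      induction p using Fin.addCases with
      | left i => exact absurd (Fin.castAdd_lt N_B i) hpA
      | right i => simpa only [Fin.append_right] using h i hpg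
  funext i
  simpa only [Fin.append_right] using congrFun hx (Fin.natAdd N_A i)

theorem card_shiftFiber_le (j : ℕ) (a : Fin N_A → Fin d) :
    #(shiftFiber N_B j a) ≤ d ^ ((N_A + N_B).gcd j - min N_A ((N_A + N_B).gcd j)) := by
  set g := (N_A + N_B).gcd j
  have hm : g - min N_A g ≤ N_B := by
    have := Nat.gcd_le_left j (NeZero.pos (N_A + N_B))
    omega
  calc #(shiftFiber N_B j a)
      ≤ #(univ : Finset (Fin (g - min N_A g) → Fin d)) := by
        refine card_le_card_of_injOn (fun b r => b (Fin.castLE hm r))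
          (fun _ _ => mem_coe.2 (mem_univ _)) fun b₁ hb₁ b₂ hb₂ h => ?_
        refine eq_of_mem_shiftFiber hb₁ hb₂ fun i hi => ?_
        exact congrFun h ⟨i, by omega⟩
    _ = d ^ (g - min N_A g) := by simp

theorem shiftFiber_nonempty (hg : (N_A + N_B).gcd j ≤ N_A) (a : Fin N_A → Fin d) :
    (shiftFiber N_B j a).Nonempty := by
  have hit : ∀ p, ∃ n,
      (· - (j : Fin (N_A + N_B)))^[n] p ∈ {q : Fin (N_A + N_B) | (q : ℕ) < N_A} := fun p =>
    (Fin.exists_val_sub_nsmul_lt_gcd j p).imp fun t ht => by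
      rw [sub_right_iterate_apply]
      exact ht.trans_le hg
  let x : Fin (N_A + N_B) → Fin d := fun p => a ⟨_, (firstHit_mem (hit p) :)⟩
  have hfix : ∀ i : Fin N_A, firstHit (· - (j : Fin (N_A + N_B))) {q | (q : ℕ) < N_A}
      (Fin.castAdd N_B i) = Fin.castAdd N_B i := fun i => firstHit_of_mem (Fin.castAdd_lt N_B i)
  have hx : Fin.append a (fun i => x (Fin.natAdd N_A i)) = x := by
    funext p
    induction p using Fin.addCases with
    | left i =>
      rw [Fin.append_left]
      exact congrArg a (Fin.ext (congrArg Fin.val (hfix i)).symm)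
    | right i => rw [Fin.append_right]
  refine ⟨fun i => x (Fin.natAdd N_A i), mem_filter.2 ⟨mem_univ _, fun i => ?_⟩⟩
  rw [hx]
  have hstep := firstHit_apply_of_notMem (hit (Fin.natAdd N_A i)) (by simp)
  simp only [x, hstep]

theorem ptraceB_shiftMatrix_pow_eq_permMat (hg : (N_A + N_B).gcd j ≤ N_A) :
    ptraceB (shiftMatrix (N_A + N_B) d ^ j) = permMat (shiftReturnPerm N_B d j) := by
  have hcard : ∀ a : Fin N_A → Fin d, #(shiftFiber N_B j a) = 1 := fun a =>
    le_antisymm (by simpa [min_eq_right hg] using card_shiftFiber_le (N_B := N_B) j a)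
      (shiftFiber_nonempty hg a).card_pos
  simp [ptraceB_shiftMatrix_pow, hcard]

theorem traceNorm_ptraceB_shiftMatrix_pow_le (j : ℕ) :
    traceNorm (ptraceB (shiftMatrix (N_A + N_B) d ^ j)) ≤
      (d : ℝ) ^ N_A * (d : ℝ) ^ ((N_A + N_B).gcd j - min N_A ((N_A + N_B).gcd j)) := by
  have hw : ∀ a : Fin N_A → Fin d, ‖(#(shiftFiber N_B j a) : ℂ)‖ ≤
      (d : ℝ) ^ ((N_A + N_B).gcd j - min N_A ((N_A + N_B).gcd j)) := fun a => by
    rw [Complex.norm_natCast]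
    exact_mod_cast card_shiftFiber_le j a
  simpa [ptraceB_shiftMatrix_pow] using
    traceNorm_permMat_mul_diagonal_le (shiftReturnPerm N_B d j) hw

theorem traceNorm_sum_smul_ptraceB_shiftMatrix_pow_le (hp : (N_A + N_B).Prime) (z : ℕ → ℂ) :
    traceNorm (∑ j ∈ Icc 1 (N_A + N_B - 1), z j • ptraceB (shiftMatrix (N_A + N_B) d ^ j)) ≤
      (∑ j ∈ Icc 1 (N_A + N_B - 1), ‖z j‖) * (d : ℝ) ^ N_A := by
  have hperm : ∀ j ∈ Icc 1 (N_A + N_B - 1),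
      ∃ σ, ptraceB (shiftMatrix (N_A + N_B) d ^ j) = permMat σ := fun j hj => by
    obtain ⟨hj1, hjN⟩ := mem_Icc.1 hj
    have hcop := Nat.coprime_of_lt_prime (n := j) (by omega) (by omega) hp
    exact ⟨_, ptraceB_shiftMatrix_pow_eq_permMat (hcop.gcd_eq_one ▸ NeZero.one_le)⟩
  simpa using traceNorm_sum_smul_permMat_le _ z _ hperm

end CyclicShift

theorem traceNorm_ptraceB_shift_pow_general (N_A N_B : ℕ) [NeZero N_A] (k : ℕ) :
    (∀ j : ℕ, 1 ≤ j → j ≤ N_A + N_B - 1 →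
      traceNorm (ptraceB (shiftMatrix (N_A + N_B) 2 ^ j)) ≤
        2 ^ N_A * 2 ^ (Nat.gcd (N_A + N_B) j - min N_A (Nat.gcd (N_A + N_B) j))) ∧
    (∀ j : ℕ, 1 ≤ j → j ≤ N_A + N_B - 1 → Nat.gcd (N_A + N_B) j ≤ N_A →
      (∃ (σ : Equiv.Perm (Fin N_A → Fin 2)) (c : ℕ),
          ptraceB (shiftMatrix (N_A + N_B) 2 ^ j) = (c : ℂ) • permMat σ) ∧
      traceNorm (ptraceB (shiftMatrix (N_A + N_B) 2 ^ j)) ≤ 2 ^ N_A) ∧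
    ((N_A + N_B).Prime → 2 ≤ N_A →
      (1 / 2 ^ (N_A + N_B) : ℝ) *
        traceNorm (∑ j ∈ Finset.Icc 1 (N_A + N_B - 1),
          Complex.exp (2 * ↑π * Complex.I * j * k / (N_A + N_B)) •
            ptraceB (shiftMatrix (N_A + N_B) 2 ^ j)) ≤
      (N_A + N_B - 1 : ℝ) / 2 ^ N_B) := by
  have hbound := traceNorm_ptraceB_shiftMatrix_pow_le (N_A := N_A) (N_B := N_B) (d := 2)
  refine ⟨fun j _ _ => by simpa using hbound j, fun j _ _ hg => ⟨?_, ?_⟩, fun hp _ => ?_⟩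
  · exact ⟨_, 1, by rw [Nat.cast_one, one_smul, ptraceB_shiftMatrix_pow_eq_permMat hg]⟩
  · simpa [min_eq_right hg] using hbound j
  have hexp : ∀ j : ℕ, ‖Complex.exp (2 * ↑π * Complex.I * j * k / (N_A + N_B))‖ = 1 := by
    intro j
    rw [← Complex.norm_exp_ofReal_mul_I (2 * π * j * k / (N_A + N_B))]
    push_cast
    ring_nf
  have hsum := traceNorm_sum_smul_ptraceB_shiftMatrix_pow_le (d := 2) hp
    fun j : ℕ => Complex.exp (2 * ↑π * Complex.I * j * k / (N_A + N_B))
  simp only [hexp, Finset.sum_const, Nat.card_Icc, nsmul_eq_mul, mul_one] at hsum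
  have hN : ((N_A + N_B - 1 + 1 - 1 : ℕ) : ℝ) = N_A + N_B - 1 := by
    rw [Nat.add_sub_cancel, Nat.cast_sub (by have := NeZero.one_le (n := N_A); omega)]
    push_cast
    ring
  rw [hN] at hsum
  calc (1 / 2 ^ (N_A + N_B) : ℝ) * traceNorm _
      ≤ (1 / 2 ^ (N_A + N_B) : ℝ) * ((N_A + N_B - 1) * 2 ^ N_A) := by gcongr; exact_mod_cast hsum
    _ = (N_A + N_B - 1 : ℝ) / 2 ^ N_B := by
      rw [pow_add]
      field_simp

/-- Trace-norm bounds on partial traces of powers of the cyclic shift `T` on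
`(ℂ^2)^{⊗(N_A+N_B)}`: in general `‖Tr_B(T^j)‖₁ ≤ 2^{N_A}·2^{gcd(N,j) − min(N_A, gcd(N,j))}`;
when `gcd(N,j) ≤ N_A`, `Tr_B(T^j)` is a nonnegative-integer multiple of a permutation matrix and
`‖Tr_B(T^j)‖₁ ≤ 2^{N_A}`; consequently, for prime `N` and `N_A ≥ 2`,
`(1/2^N)‖∑_{j=1}^{N-1} e^{2πijk/N} Tr_B(T^j)‖₁ ≤ (N-1)/2^{N_B}`. -/
theorem traceNorm_ptraceB_shift_pow (N_A N_B : ℕ) [NeZero N_A] [NeZero N_B] (k : ℕ) :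
    (∀ j : ℕ, 1 ≤ j → j ≤ N_A + N_B - 1 →
      traceNorm (ptraceB (shiftMatrix (N_A + N_B) 2 ^ j)) ≤
        2 ^ N_A * 2 ^ (Nat.gcd (N_A + N_B) j - min N_A (Nat.gcd (N_A + N_B) j))) ∧
    (∀ j : ℕ, 1 ≤ j → j ≤ N_A + N_B - 1 → Nat.gcd (N_A + N_B) j ≤ N_A →
      (∃ (σ : Equiv.Perm (Fin N_A → Fin 2)) (c : ℕ),
          ptraceB (shiftMatrix (N_A + N_B) 2 ^ j) = (c : ℂ) • permMat σ) ∧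
      traceNorm (ptraceB (shiftMatrix (N_A + N_B) 2 ^ j)) ≤ 2 ^ N_A) ∧
    ((N_A + N_B).Prime → 2 ≤ N_A →
      (1 / 2 ^ (N_A + N_B) : ℝ) *
        traceNorm (∑ j ∈ Finset.Icc 1 (N_A + N_B - 1),
          Complex.exp (2 * ↑π * Complex.I * j * k / (N_A + N_B)) •
            ptraceB (shiftMatrix (N_A + N_B) 2 ^ j)) ≤
      (N_A + N_B - 1 : ℝ) / 2 ^ N_B) :=
  traceNorm_ptraceB_shift_pow_general N_A N_B k
end
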